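/- (Convergence of STRIDE.) Assume (P) has an optimal solution X* and a dual feasible pair (y*, S*) with ⟨C, X*⟩ = ⟨b, y*⟩. Let ε > 0, M > 0, c > 0, let ε_k ≥ 0 with Σ_{k≥1} k ε_k < ∞, and let σ_k > 0 (k ≥ 0) be nondecreasing with σ_k ≥ c√k. Let X^0 ∈ S^n_+ and let sequences X̄^k, X^k, y^k, S^k (k ≥ 1) satisfy for every k ≥ 1: X̄^k ⪰ 0, S^k ⪰ 0, ‖A(X̄^k) − b‖ ≤ ε_k, A*y^k + S^k − C = (1/σ_k)(X̄^k − X^{k−1}), ⟨X̄^k, S^k⟩ = 0, and ‖y^k‖ ≤ M; moreover for every k ≥ 1, either X^k = X̄^k, or X^k ∈ F_P and ⟨C, X^k⟩ < min{⟨C, X̄^k⟩, min_{X ∈ V_{k−1}} ⟨C, X⟩} − ε, where V_{k−1} consists of X^0 (if X^0 ∈ F_P) together with all X^j, 1 ≤ j ≤ k−1, for which X^j ≠ X̄^j (the minimum over an empty set being +∞). Then ⟨C, X̄^k⟩ converges to the optimal value ⟨C, X*⟩ of (P) as k → ∞. -/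

import Mathlib

set_option autoImplicit false

open Matrix Finset Filter
open scoped RealInnerProductSpace

noncomputable section

/-- The trace inner product `⟨X, Y⟩ = trace (Xᵀ * Y)` on real `n × n` matrices. -/
def mInner {n : ℕ} (X Y : Matrix (Fin n) (Fin n) ℝ) : ℝ := (Xᵀ * Y).trace

/-- The Frobenius norm induced by the trace inner product. -/
def mNorm {n : ℕ} (X : Matrix (Fin n) (Fin n) ℝ) : ℝ := Real.sqrt (mInner X X)

/-- `ℝ^m` with the Euclidean inner product. -/
abbrev Vec (m : ℕ) := EuclideanSpace ℝ (Fin m)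

/-!
Weak duality against `(y*, S*)` gives `⟨C, X⟩ ≥ p* - ‖y*‖ ‖A X - b‖` for every `X ⪰ 0`. Accepted
points are feasible, so their objective values are bounded below by `p*` while each acceptance
improves on the previous ones by `ε`: there are only finitely many, and eventually `Xᵏ = X̄ᵏ`.
From then on the optimality condition of the proximal step and the three-point identity give
`⟨C, X̄ᵏ⟩ - p* ≤ M εₖ + (‖Xᵏ⁻¹ - X*‖² - ‖Xᵏ - X*‖²) / (2σₖ)`, which telescopes because `σ` is
nondecreasing. Hence the nonnegative gaps `⟨C, X̄ᵏ⟩ - p* + ‖y*‖ εₖ` are summable and tend to `0`.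
-/

section MatrixInner

variable {n : ℕ}

lemma mInner_eq_sum (X Y : Matrix (Fin n) (Fin n) ℝ) :
    mInner X Y = ∑ j, ∑ i, X i j * Y i j := by
  simp [mInner, Matrix.trace, Matrix.mul_apply]

lemma mInner_comm (X Y : Matrix (Fin n) (Fin n) ℝ) : mInner X Y = mInner Y X := by
  simp only [mInner_eq_sum, mul_comm]

lemma mInner_add_left (X Y Z : Matrix (Fin n) (Fin n) ℝ) :
    mInner (X + Y) Z = mInner X Z + mInner Y Z := by
  simp [mInner_eq_sum, add_mul, Finset.sum_add_distrib]

lemma mInner_sub_left (X Y Z : Matrix (Fin n) (Fin n) ℝ) :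
    mInner (X - Y) Z = mInner X Z - mInner Y Z := by
  simp [mInner_eq_sum, sub_mul, Finset.sum_sub_distrib]

lemma mInner_sub_right (X Y Z : Matrix (Fin n) (Fin n) ℝ) :
    mInner X (Y - Z) = mInner X Y - mInner X Z := by
  simp [mInner_eq_sum, mul_sub, Finset.sum_sub_distrib]

lemma mInner_smul_left (r : ℝ) (X Y : Matrix (Fin n) (Fin n) ℝ) :
    mInner (r • X) Y = r * mInner X Y := by
  simp [mInner_eq_sum, Finset.mul_sum, mul_assoc]

lemma mInner_self_nonneg (X : Matrix (Fin n) (Fin n) ℝ) : 0 ≤ mInner X X := by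
  rw [mInner_eq_sum]
  exact Finset.sum_nonneg fun j _ => Finset.sum_nonneg fun i _ => mul_self_nonneg _

lemma mInner_nonneg_of_posSemidef {P Q : Matrix (Fin n) (Fin n) ℝ}
    (hP : P.PosSemidef) (hQ : Q.PosSemidef) : 0 ≤ mInner P Q := by
  obtain ⟨L, hL⟩ : ∃ L : Matrix (Fin n) (Fin n) ℝ, Q = Lᵀ * L := by
    open scoped MatrixOrder in
    exact CStarAlgebra.nonneg_iff_eq_star_mul_self.mp hQ.nonneg
  have hPt : Pᵀ = P := by
    rw [← Matrix.conjTranspose_eq_transpose_of_trivial]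
    exact hP.1
  -- `trace (P Lᵀ L) = trace (L P Lᵀ)`, the trace of a congruence of `P`
  have hcongr : (L * P * Lᵀ).PosSemidef := by
    simpa using hP.mul_mul_conjTranspose_same L
  rw [mInner, hPt, hL, ← mul_assoc, Matrix.trace_mul_cycle]
  simpa [mul_assoc] using hcongr.trace_nonneg

lemma two_mul_mInner_sub_sub (u v w : Matrix (Fin n) (Fin n) ℝ) :
    2 * mInner (u - v) (u - w) =
      mInner (u - v) (u - v) + mInner (u - w) (u - w) - mInner (v - w) (v - w) := by
  simp only [mInner_eq_sum, Matrix.sub_apply, Finset.mul_sum, ← Finset.sum_add_distrib,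
    ← Finset.sum_sub_distrib]
  exact Finset.sum_congr rfl fun j _ => Finset.sum_congr rfl fun i _ => by ring

end MatrixInner

section Duality

variable {n m : ℕ} {A : Matrix (Fin n) (Fin n) ℝ →ₗ[ℝ] Vec m}
  {Aadj : Vec m →ₗ[ℝ] Matrix (Fin n) (Fin n) ℝ} {b : Vec m} {y : Vec m}
  {C S X : Matrix (Fin n) (Fin n) ℝ}

lemma inner_sub_norm_mul_le_mInner {δ : ℝ}
    (hadj : ∀ (X : Matrix (Fin n) (Fin n) ℝ) (ξ : Vec m), ⟪A X, ξ⟫ = mInner X (Aadj ξ))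
    (hdual : Aadj y + S = C) (hS : S.PosSemidef) (hX : X.PosSemidef) (hres : ‖A X - b‖ ≤ δ) :
    ⟪b, y⟫ - ‖y‖ * δ ≤ mInner C X := by
  have hsplit : mInner C X = ⟪b, y⟫ + ⟪A X - b, y⟫ + mInner S X := by
    rw [← hdual, mInner_add_left, mInner_comm (Aadj y), ← hadj, inner_sub_left]
    ring
  have hresidual : -(‖y‖ * δ) ≤ ⟪A X - b, y⟫ :=
    neg_le_of_abs_le <| (abs_real_inner_le_norm _ _).trans <| by
      rw [mul_comm]
      exact mul_le_mul_of_nonneg_left hres (norm_nonneg y)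
  linarith [mInner_nonneg_of_posSemidef hS hX]

lemma mInner_sub_le_of_proximal_step {Xstar Xbar X₀ : Matrix (Fin n) (Fin n) ℝ} {σ M δ : ℝ}
    (hadj : ∀ (X : Matrix (Fin n) (Fin n) ℝ) (ξ : Vec m), ⟪A X, ξ⟫ = mInner X (Aadj ξ))
    (hσ : 0 < σ) (hXstar : Xstar.PosSemidef) (hAXstar : A Xstar = b) (hS : S.PosSemidef)
    (hdual : Aadj y + S - C = (1 / σ) • (Xbar - X₀)) (hcomp : mInner Xbar S = 0)
    (hy : ‖y‖ ≤ M) (hres : ‖A Xbar - b‖ ≤ δ) :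
    mInner C Xbar - mInner C Xstar ≤ M * δ +
      (mInner (X₀ - Xstar) (X₀ - Xstar) - mInner (Xbar - Xstar) (Xbar - Xstar)) / (2 * σ) := by
  have hC : C = Aadj y + S - (1 / σ) • (Xbar - X₀) := by
    rw [← hdual]
    abel
  have hsplit : mInner C Xbar - mInner C Xstar =
      ⟪A Xbar - b, y⟫ - mInner S Xstar - (1 / σ) * mInner (Xbar - X₀) (Xbar - Xstar) := by
    rw [← mInner_sub_right, hC, mInner_sub_left, mInner_add_left, mInner_smul_left,
      mInner_comm (Aadj y), ← hadj, map_sub, hAXstar, mInner_sub_right S, mInner_comm S Xbar,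
      hcomp]
    ring
  have hthree : (mInner (Xbar - Xstar) (Xbar - Xstar) - mInner (X₀ - Xstar) (X₀ - Xstar)) / 2
      ≤ mInner (Xbar - X₀) (Xbar - Xstar) := by
    linarith [two_mul_mInner_sub_sub Xbar X₀ Xstar, mInner_self_nonneg (Xbar - X₀)]
  have hscaled := mul_le_mul_of_nonneg_left hthree (one_div_pos.mpr hσ).le
  have hrewrite : (mInner (X₀ - Xstar) (X₀ - Xstar) - mInner (Xbar - Xstar) (Xbar - Xstar)) /
      (2 * σ) = -((1 / σ) *
        ((mInner (Xbar - Xstar) (Xbar - Xstar) - mInner (X₀ - Xstar) (X₀ - Xstar)) / 2)) := by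
    field_simp
    ring
  have hresidual : ⟪A Xbar - b, y⟫ ≤ M * δ :=
    (real_inner_le_norm _ _).trans <| by
      rw [mul_comm]
      exact mul_le_mul hy hres (norm_nonneg _) ((norm_nonneg y).trans hy)
  linarith [mInner_nonneg_of_posSemidef hS hXstar]

end Duality

lemma Set.finite_of_forall_lt_sub_of_le {s : Set ℕ} {f : ℕ → ℝ} {L ε : ℝ} (hε : 0 < ε)
    (hL : ∀ k ∈ s, L ≤ f k) (hdec : ∀ j ∈ s, ∀ k ∈ s, j < k → f k < f j - ε) : s.Finite := by
  by_contra hs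
  set e := Nat.nth (· ∈ s)
  have he : ∀ i, e i ∈ s := Nat.nth_mem_of_infinite hs
  have hlin : ∀ i : ℕ, f (e i) ≤ f (e 0) - i * ε := by
    intro i
    induction i with
    | zero => simp
    | succ i ih =>
      have := hdec _ (he i) _ (he (i + 1)) (Nat.nth_strictMono hs i.lt_succ_self)
      push_cast
      linarith
  obtain ⟨i, hi⟩ := exists_nat_gt ((f (e 0) - L) / ε)
  rw [div_lt_iff₀ hε] at hi
  linarith [hL _ (he i), hlin i]

lemma Summable.of_natCast_mul {f : ℕ → ℝ} (hf : ∀ k, 0 ≤ f k)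
    (h : Summable fun k : ℕ => (k : ℝ) * f k) : Summable f := by
  rw [← summable_nat_add_iff 1] at h ⊢
  refine h.of_nonneg_of_le (fun k => hf _) fun k => le_mul_of_one_le_left (hf _) ?_
  push_cast
  linarith [k.cast_nonneg (α := ℝ)]

lemma tendsto_zero_of_le_add_telescoping {a e d σ : ℕ → ℝ} (he : Summable e)
    (he₀ : ∀ k, 0 ≤ e k) (hd : ∀ k, 0 ≤ d k) (hσ : ∀ k, 0 < σ k) (hσmono : Monotone σ)
    (hlow : ∀ k, -e k ≤ a k) (hup : ∀ k, a k ≤ e k + (d k - d (k + 1)) / σ k) :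
    Tendsto a atTop (nhds 0) := by
  set t : ℕ → ℝ := fun k => d k / σ k
  have ht : ∀ k, 0 ≤ t k := fun k => div_nonneg (hd k) (hσ k).le
  have hstep : ∀ k, a k + e k ≤ 2 * e k + (t k - t (k + 1)) := by
    intro k
    have : t (k + 1) ≤ d (k + 1) / σ k :=
      div_le_div_of_nonneg_left (hd _) (hσ k) (hσmono k.le_succ)
    linarith [hup k, sub_div (d k) (d (k + 1)) (σ k)]
  have hsum : Summable fun k => a k + e k := by
    refine summable_of_sum_range_le (c := 2 * ∑' k, e k + t 0)
      (fun k => by linarith [hlow k]) fun N => ?_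
    calc ∑ k ∈ Finset.range N, (a k + e k)
        ≤ ∑ k ∈ Finset.range N, (2 * e k + (t k - t (k + 1))) :=
          Finset.sum_le_sum fun k _ => hstep k
      _ = 2 * ∑ k ∈ Finset.range N, e k + (t 0 - t N) := by
          rw [Finset.sum_add_distrib, ← Finset.mul_sum, Finset.sum_range_sub']
      _ ≤ 2 * ∑' k, e k + t 0 := by
          linarith [he.sum_le_tsum (Finset.range N) fun k _ => he₀ k, ht N]
  simpa using hsum.tendsto_atTop_zero.sub he.tendsto_atTop_zero

lemma tendsto_zero_of_le_add_telescoping_of_lt {a e d σ : ℕ → ℝ} (N : ℕ) (he : Summable e)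
    (he₀ : ∀ k, 0 ≤ e k) (hd : ∀ k, 0 ≤ d k) (hσ : ∀ k, 0 < σ k) (hσmono : Monotone σ)
    (hlow : ∀ k, N < k → -e k ≤ a k) (hup : ∀ k, N < k → a k ≤ e k + (d (k - 1) - d k) / σ k) :
    Tendsto a atTop (nhds 0) := by
  rw [← tendsto_add_atTop_iff_nat (N + 1)]
  refine tendsto_zero_of_le_add_telescoping (e := fun i => e (i + (N + 1)))
    (d := fun i => d (i + N)) (σ := fun i => σ (i + (N + 1))) ((summable_nat_add_iff _).mpr he)
    (fun i => he₀ _) (fun i => hd _) (fun i => hσ _) (fun i j hij => hσmono (by omega))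
    (fun i => hlow _ (by omega)) fun i => ?_
  simpa [show i + (N + 1) - 1 = i + N by omega, show i + 1 + N = i + (N + 1) by omega] using
    hup (i + (N + 1)) (by omega)

theorem stride_convergence_general {n m : ℕ}
    (A : Matrix (Fin n) (Fin n) ℝ →ₗ[ℝ] Vec m)
    (Aadj : Vec m →ₗ[ℝ] Matrix (Fin n) (Fin n) ℝ)
    (hadj : ∀ (X : Matrix (Fin n) (Fin n) ℝ) (ξ : Vec m), ⟪A X, ξ⟫ = mInner X (Aadj ξ))
    (b : Vec m) (C : Matrix (Fin n) (Fin n) ℝ)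
    -- (P) has an optimal solution Xstar
    (Xstar : Matrix (Fin n) (Fin n) ℝ) (hXstar : Xstar.PosSemidef)
    (hAXstar : A Xstar = b)
    -- a dual feasible pair with zero duality gap
    (ystar : Vec m) (Sstar : Matrix (Fin n) (Fin n) ℝ)
    (hdualfeas : Aadj ystar + Sstar = C) (hSstar : Sstar.PosSemidef)
    (hgap : mInner C Xstar = ⟪b, ystar⟫)
    -- parameters
    (ε M : ℝ) (hε : 0 < ε)
    (εs : ℕ → ℝ) (hεs : ∀ k, 0 ≤ εs k)
    (hsum : Summable (fun k : ℕ => (k : ℝ) * εs k))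
    (σ : ℕ → ℝ) (hσpos : ∀ k, 0 < σ k) (hσmono : Monotone σ)
    -- the STRIDE iterates
    (X Xbar : ℕ → Matrix (Fin n) (Fin n) ℝ)
    (y : ℕ → Vec m) (S : ℕ → Matrix (Fin n) (Fin n) ℝ)
    (hXbarpsd : ∀ k, 1 ≤ k → (Xbar k).PosSemidef)
    (hSpsd : ∀ k, 1 ≤ k → (S k).PosSemidef)
    (hfeas : ∀ k, 1 ≤ k → ‖A (Xbar k) - b‖ ≤ εs k)
    (hdual : ∀ k, 1 ≤ k → Aadj (y k) + S k - C = (1 / σ k) • (Xbar k - X (k - 1)))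
    (hcomp : ∀ k, 1 ≤ k → mInner (Xbar k) (S k) = 0)
    (hy : ∀ k, 1 ≤ k → ‖y k‖ ≤ M)
    -- the accept/reject policy: either keep the projected point, or accept a strictly
    -- better feasible point (better than Xbar k and all previously accepted points by ε)
    (hpolicy : ∀ k, 1 ≤ k →
      X k = Xbar k ∨
        (A (X k) = b ∧ (X k).PosSemidef ∧
          mInner C (X k) < mInner C (Xbar k) - ε ∧
          (A (X 0) = b → mInner C (X k) < mInner C (X 0) - ε) ∧
          ∀ j, 1 ≤ j → j ≤ k - 1 → X j ≠ Xbar j →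
            mInner C (X k) < mInner C (X j) - ε)) :
    Tendsto (fun k => mInner C (Xbar k)) atTop (nhds (mInner C Xstar)) := by
  have hM : 0 ≤ M := (norm_nonneg _).trans (hy 1 le_rfl)
  have hlow : ∀ k, 1 ≤ k → mInner C Xstar - ‖ystar‖ * εs k ≤ mInner C (Xbar k) := fun k hk =>
    hgap ▸ inner_sub_norm_mul_le_mInner hadj hdualfeas hSstar (hXbarpsd k hk) (hfeas k hk)
  have hup : ∀ k, 1 ≤ k → mInner C (Xbar k) - mInner C Xstar ≤ M * εs k +
      (mInner (X (k - 1) - Xstar) (X (k - 1) - Xstar) -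
        mInner (Xbar k - Xstar) (Xbar k - Xstar)) / (2 * σ k) := fun k hk =>
    mInner_sub_le_of_proximal_step hadj (hσpos k) hXstar hAXstar (hSpsd k hk) (hdual k hk)
      (hcomp k hk) (hy k hk) (hfeas k hk)
  obtain ⟨K, hK⟩ : BddAbove {k | 1 ≤ k ∧ X k ≠ Xbar k} := by
    refine (Set.finite_of_forall_lt_sub_of_le (f := fun k => mInner C (X k))
      (L := mInner C Xstar) hε ?_ ?_).bddAbove
    · rintro k ⟨hk, hne⟩
      obtain ⟨hAX, hXpsd, -⟩ := (hpolicy k hk).resolve_left hne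
      simpa [hgap] using inner_sub_norm_mul_le_mInner hadj hdualfeas hSstar hXpsd
        (by simp [hAX] : ‖A (X k) - b‖ ≤ 0)
    · rintro j ⟨hj, hjne⟩ k ⟨hk, hkne⟩ hjk
      obtain ⟨-, -, -, -, hbetter⟩ := (hpolicy k hk).resolve_left hkne
      exact hbetter j hj (by omega) hjne
  refine tendsto_sub_nhds_zero_iff.mp <| tendsto_zero_of_le_add_telescoping_of_lt K
    (e := fun k => (M + ‖ystar‖) * εs k) (d := fun k => mInner (X k - Xstar) (X k - Xstar))
    (σ := fun k => 2 * σ k) ((Summable.of_natCast_mul hεs hsum).mul_left _)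
    (fun k => mul_nonneg (add_nonneg hM (norm_nonneg _)) (hεs k)) (fun k => mInner_self_nonneg _)
    (fun k => mul_pos two_pos (hσpos k)) (hσmono.const_mul zero_le_two) (fun k hk => ?_)
    (fun k hk => ?_)
  · linarith [hlow k (by omega), mul_nonneg hM (hεs k)]
  · have hkept : X k = Xbar k := by_contra fun hne => absurd (hK ⟨by omega, hne⟩) (by omega)
    rw [hkept]
    linarith [hup k (by omega), mul_nonneg (norm_nonneg ystar) (hεs k)]

/-- global convergence of STRIDE (Theorem 2 in the paper). -/
theorem stride_convergence {n m : ℕ}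
    (A : Matrix (Fin n) (Fin n) ℝ →ₗ[ℝ] Vec m)
    (Aadj : Vec m →ₗ[ℝ] Matrix (Fin n) (Fin n) ℝ)
    (hadj : ∀ (X : Matrix (Fin n) (Fin n) ℝ) (ξ : Vec m), ⟪A X, ξ⟫ = mInner X (Aadj ξ))
    (b : Vec m) (C : Matrix (Fin n) (Fin n) ℝ) (hC : C.IsSymm)
    -- (P) has an optimal solution Xstar
    (Xstar : Matrix (Fin n) (Fin n) ℝ) (hXstar : Xstar.PosSemidef)
    (hAXstar : A Xstar = b)
    (hXstarOpt : ∀ X' : Matrix (Fin n) (Fin n) ℝ, X'.PosSemidef → A X' = b →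
      mInner C Xstar ≤ mInner C X')
    -- a dual feasible pair with zero duality gap
    (ystar : Vec m) (Sstar : Matrix (Fin n) (Fin n) ℝ)
    (hdualfeas : Aadj ystar + Sstar = C) (hSstar : Sstar.PosSemidef)
    (hgap : mInner C Xstar = ⟪b, ystar⟫)
    -- parameters
    (ε M c : ℝ) (hε : 0 < ε) (hM : 0 < M) (hc : 0 < c)
    (εs : ℕ → ℝ) (hεs : ∀ k, 0 ≤ εs k)
    (hsum : Summable (fun k : ℕ => (k : ℝ) * εs k))
    (σ : ℕ → ℝ) (hσpos : ∀ k, 0 < σ k) (hσmono : Monotone σ)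
    (hσgrow : ∀ k : ℕ, c * Real.sqrt (k : ℝ) ≤ σ k)
    -- the STRIDE iterates
    (X Xbar : ℕ → Matrix (Fin n) (Fin n) ℝ)
    (y : ℕ → Vec m) (S : ℕ → Matrix (Fin n) (Fin n) ℝ)
    (hX0 : (X 0).PosSemidef)
    (hXbarpsd : ∀ k, 1 ≤ k → (Xbar k).PosSemidef)
    (hSpsd : ∀ k, 1 ≤ k → (S k).PosSemidef)
    (hfeas : ∀ k, 1 ≤ k → ‖A (Xbar k) - b‖ ≤ εs k)
    (hdual : ∀ k, 1 ≤ k → Aadj (y k) + S k - C = (1 / σ k) • (Xbar k - X (k - 1)))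
    (hcomp : ∀ k, 1 ≤ k → mInner (Xbar k) (S k) = 0)
    (hy : ∀ k, 1 ≤ k → ‖y k‖ ≤ M)
    -- the accept/reject policy: either keep the projected point, or accept a strictly
    -- better feasible point (better than Xbar k and all previously accepted points by ε)
    (hpolicy : ∀ k, 1 ≤ k →
      X k = Xbar k ∨
        (A (X k) = b ∧ (X k).PosSemidef ∧
          mInner C (X k) < mInner C (Xbar k) - ε ∧
          (A (X 0) = b → mInner C (X k) < mInner C (X 0) - ε) ∧
          ∀ j, 1 ≤ j → j ≤ k - 1 → X j ≠ Xbar j →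
            mInner C (X k) < mInner C (X j) - ε)) :
    Tendsto (fun k => mInner C (Xbar k)) atTop (nhds (mInner C Xstar)) :=
  stride_convergence_general A Aadj hadj b C Xstar hXstar hAXstar ystar Sstar hdualfeas hSstar hgap
    ε M hε εs hεs hsum σ hσpos hσmono X Xbar y S hXbarpsd hSpsd hfeas hdual hcomp hy hpolicy
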